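/- arXiv:2106.03795 — 6 statements merged into one kernel-verified Lean document; each statement's English description precedes it below -/
import Mathlib

section
/- Let f_w(x) = W_L φ(W_{L-1} φ(··· φ(W_1 x))) be an L-layer ReLU network with weight matrices W_l, and let f_{w'} be another network with the same architecture. If ‖w'_l − w_l‖_F ≤ υ_l for all l (Frobenius norm) and ‖x‖ ≤ B, then ‖f_{w'}(x) − f_w(x)‖ ≤ B·(∏_{l=1}^L (‖w_l‖ + υ_l) − ∏_{l=1}^L ‖w_l‖). -/
open Finset

/-- Frobenius norm of a real matrix. -/
noncomputable def frob {n m : ℕ} (M : Matrix (Fin n) (Fin m) ℝ) : ℝ :=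
  Real.sqrt (∑ i, ∑ j, (M i j) ^ 2)

/-- Output of the first `l` layers of a fully connected ReLU network:
`f⁰ = x`, `f¹ = W₀ x`, `f^{l+1} = W_l φ(f^l)` where `φ` is the ReLU. -/
noncomputable def layerOut (h : ℕ → ℕ) (W : ∀ l : ℕ, Matrix (Fin (h (l + 1))) (Fin (h l)) ℝ) :
    (l : ℕ) → EuclideanSpace ℝ (Fin (h 0)) → EuclideanSpace ℝ (Fin (h l))
  | 0, x => x
  | 1, x => WithLp.toLp 2 ((W 0).mulVec x)
  | (l + 2), x => WithLp.toLp 2 ((W (l + 1)).mulVec (fun i => max (layerOut h W (l + 1) x i) 0))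

/-!
Let `d_l` be the distance between the outputs of the first `l` layers of the two networks and
`a_l, a'_l` the vectors fed into `W_l, W'_l`. Splitting `W'_l a'_l - W_l a_l` as
`(W'_l - W_l) a_l + W'_l (a'_l - a_l)`, and using that `φ` is `1`-Lipschitz with `φ 0 = 0`, gives
`d_{l+1} ≤ υ_l B ∏_{i<l} ‖W_i‖ + (‖W_l‖ + υ_l) d_l`; the claimed bound satisfies this
recursion with equality.
-/

section Frobenius

attribute [local instance] Matrix.frobeniusNormedAddCommGroup

open Matrix WithLp in
theorem Matrix.frobenius_norm_toLp_mulVec_le {m n 𝕜 : Type*} [Fintype m] [Fintype n]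
    [RCLike 𝕜] (M : Matrix m n 𝕜) (v : n → 𝕜) :
    ‖toLp 2 (M *ᵥ v)‖ ≤ ‖M‖ * ‖toLp 2 v‖ := by
  simpa only [← frobenius_norm_replicateCol (ι := Unit), replicateCol_mulVec]
    using frobenius_norm_mul M (replicateCol Unit v)

theorem frob_eq_frobenius_norm {n m : ℕ} (M : Matrix (Fin n) (Fin m) ℝ) : frob M = ‖M‖ := by
  simp [frob, Matrix.frobenius_norm_def, Real.sqrt_eq_rpow]

theorem frob_le_frob_add_frob_sub {n m : ℕ} (M M' : Matrix (Fin n) (Fin m) ℝ) :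
    frob M' ≤ frob M + frob (M' - M) := by
  simpa only [frob_eq_frobenius_norm] using norm_le_insert' M' M

theorem frob_nonneg {n m : ℕ} (M : Matrix (Fin n) (Fin m) ℝ) : 0 ≤ frob M :=
  frob_eq_frobenius_norm M ▸ norm_nonneg M

end Frobenius

theorem norm_toLp_mulVec_le_frob {n m : ℕ} (M : Matrix (Fin n) (Fin m) ℝ)
    (v : EuclideanSpace ℝ (Fin m)) : ‖WithLp.toLp 2 (M.mulVec v)‖ ≤ frob M * ‖v‖ := by
  rw [frob_eq_frobenius_norm]
  exact M.frobenius_norm_toLp_mulVec_le v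

theorem norm_toLp_mulVec_sub_mulVec_le {n m : ℕ} (M M' : Matrix (Fin n) (Fin m) ℝ)
    (v v' : EuclideanSpace ℝ (Fin m)) :
    ‖WithLp.toLp 2 (M'.mulVec v') - WithLp.toLp 2 (M.mulVec v)‖ ≤
      frob (M' - M) * ‖v‖ + frob M' * ‖v' - v‖ := by
  have hsplit : WithLp.toLp 2 (M'.mulVec v') - WithLp.toLp 2 (M.mulVec v) =
      WithLp.toLp 2 ((M' - M).mulVec v) + WithLp.toLp 2 (M'.mulVec (v' - v)) := by
    ext i
    simp [Matrix.sub_mulVec, Matrix.mulVec_sub]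
  rw [hsplit]
  exact (norm_add_le _ _).trans
    (add_le_add (norm_toLp_mulVec_le_frob _ _) (norm_toLp_mulVec_le_frob _ _))

noncomputable def relu {ι : Type*} (u : EuclideanSpace ℝ ι) : EuclideanSpace ℝ ι :=
  WithLp.toLp 2 (fun i => max (u i) 0)

theorem norm_relu_sub_relu_le {ι : Type*} [Fintype ι] (u v : EuclideanSpace ℝ ι) :
    ‖relu u - relu v‖ ≤ ‖u - v‖ := by
  simp only [EuclideanSpace.norm_eq]
  gcongr with i
  simpa [relu] using abs_max_sub_max_le_abs (u i) (v i) 0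

theorem norm_relu_le {ι : Type*} [Fintype ι] (u : EuclideanSpace ℝ ι) :
    ‖relu u‖ ≤ ‖u‖ := by
  have h := norm_relu_sub_relu_le u 0
  have : relu (0 : EuclideanSpace ℝ ι) = 0 := by ext; simp [relu]
  simpa [this] using h

section Network

variable {h : ℕ → ℕ} (W : ∀ l : ℕ, Matrix (Fin (h (l + 1))) (Fin (h l)) ℝ)

noncomputable def layerIn :
    (l : ℕ) → EuclideanSpace ℝ (Fin (h 0)) → EuclideanSpace ℝ (Fin (h l))
  | 0, x => x
  | l + 1, x => relu (layerOut h W (l + 1) x)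

theorem layerOut_succ (l : ℕ) (x : EuclideanSpace ℝ (Fin (h 0))) :
    layerOut h W (l + 1) x = WithLp.toLp 2 ((W l).mulVec (layerIn W l x)) := by
  cases l <;> rfl

theorem norm_layerIn_le (l : ℕ) (x : EuclideanSpace ℝ (Fin (h 0))) :
    ‖layerIn W l x‖ ≤ ‖layerOut h W l x‖ := by
  cases l with
  | zero => rfl
  | succ l => exact norm_relu_le _

theorem norm_layerIn_sub_le (W' : ∀ l : ℕ, Matrix (Fin (h (l + 1))) (Fin (h l)) ℝ) (l : ℕ)
    (x : EuclideanSpace ℝ (Fin (h 0))) :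
    ‖layerIn W' l x - layerIn W l x‖ ≤ ‖layerOut h W' l x - layerOut h W l x‖ := by
  cases l with
  | zero => rfl
  | succ l => exact norm_relu_sub_relu_le _ _

theorem norm_layerOut_le (l : ℕ) (x : EuclideanSpace ℝ (Fin (h 0))) :
    ‖layerOut h W l x‖ ≤ ‖x‖ * ∏ i ∈ range l, frob (W i) := by
  induction l with
  | zero => simp [layerOut]
  | succ l ih =>
    rw [layerOut_succ, prod_range_succ, ← mul_assoc, mul_comm _ (frob (W l))]
    exact (norm_toLp_mulVec_le_frob _ _).trans <|
      mul_le_mul_of_nonneg_left ((norm_layerIn_le W l x).trans ih) (frob_nonneg _)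

end Network

theorem network_perturbation_bound_general
    (L : ℕ) (h : ℕ → ℕ)
    (W W' : ∀ l : ℕ, Matrix (Fin (h (l + 1))) (Fin (h l)) ℝ)
    (υ : ℕ → ℝ) (hW : ∀ l < L, frob (W' l - W l) ≤ υ l)
    (B : ℝ) (x : EuclideanSpace ℝ (Fin (h 0))) (hx : ‖x‖ ≤ B) :
    ‖layerOut h W' L x - layerOut h W L x‖ ≤
      B * (∏ l ∈ Finset.range L, (frob (W l) + υ l) - ∏ l ∈ Finset.range L, frob (W l)) := by
  induction L with
  | zero => simp [layerOut]
  | succ L ih =>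
    specialize ih fun l hl => hW l (Nat.lt_succ_of_lt hl)
    have hυ : frob (W' L - W L) ≤ υ L := hW L (Nat.lt_succ_self L)
    have hin : ‖layerIn W L x‖ ≤ B * ∏ l ∈ range L, frob (W l) :=
      (norm_layerIn_le W L x).trans <| (norm_layerOut_le W L x).trans <|
        mul_le_mul_of_nonneg_right hx (prod_nonneg fun _ _ => frob_nonneg _)
    have hdiff := (norm_layerIn_sub_le W W' L x).trans ih
    have hW'L : frob (W' L) ≤ frob (W L) + υ L :=
      (frob_le_frob_add_frob_sub _ _).trans (by linarith)
    rw [layerOut_succ, layerOut_succ, prod_range_succ, prod_range_succ]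
    calc _ ≤ frob (W' L - W L) * ‖layerIn W L x‖ +
          frob (W' L) * ‖layerIn W' L x - layerIn W L x‖ :=
          norm_toLp_mulVec_sub_mulVec_le _ _ _ _
      _ ≤ υ L * (B * ∏ l ∈ range L, frob (W l)) + (frob (W L) + υ L) *
            (B * (∏ l ∈ range L, (frob (W l) + υ l) - ∏ l ∈ range L, frob (W l))) := by
          gcongr
          · exact (frob_nonneg _).trans hυ
          · exact (frob_nonneg _).trans hW'L
      _ = _ := by ring

theorem network_perturbation_bound
    (L : ℕ) (hL : 1 ≤ L) (h : ℕ → ℕ)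
    (W W' : ∀ l : ℕ, Matrix (Fin (h (l + 1))) (Fin (h l)) ℝ)
    (υ : ℕ → ℝ) (hW : ∀ l < L, frob (W' l - W l) ≤ υ l)
    (B : ℝ) (x : EuclideanSpace ℝ (Fin (h 0))) (hx : ‖x‖ ≤ B) :
    ‖layerOut h W' L x - layerOut h W L x‖ ≤
      B * (∏ l ∈ Finset.range L, (frob (W l) + υ l) - ∏ l ∈ Finset.range L, frob (W l)) :=
  network_perturbation_bound_general L h W W' υ hW B x hx
end

section
/- Fix Γ_1 < Γ_2 < ... < Γ_d positive reals, p > 0 and α ∈ (0,2), and let z_l(α) = Γ_l^{−1/α}. For κ ∈ (0,1), define E(α) = (Σ_{l=⌈κd⌉+1}^{d} Γ_l^{−p/α}) / (Σ_{l=1}^{d} Γ_l^{−p/α}). Then E(α) is strictly increasing in α, provided Γ_{⌈κd⌉+1} > Γ_{⌈κd⌉} (strict increase of the Γ_l). -/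
/-!
Write `w_l(x) = Γ_l ^ x`, so that `E(α)` is the share of the tail indices `l ≥ k` in the total
weight at exponent `x = -p/α`, which increases with `α`. For a head index `j < k` and a tail index
`l ≥ k` we have `Γ_j < Γ_l`, so raising the exponent multiplies `w_l` by more than `w_j`:
`w_j(y) w_l(x) < w_j(x) w_l(y)` for `x < y`. Summing over all such pairs gives
`T(x) H(y) < T(y) H(x)` for the head and tail sums `H`, `T`, which is exactly
`T(x) / (H(x) + T(x)) < T(y) / (H(y) + T(y))`.
-/

open Finset

lemma rpow_mul_rpow_lt_rpow_mul_rpow {a b x y : ℝ} (ha : 0 < a) (hab : a < b) (hxy : x < y) :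
    a ^ y * b ^ x < a ^ x * b ^ y := by
  have hb : 0 < b := ha.trans hab
  have hgap : a ^ (y - x) < b ^ (y - x) := Real.rpow_lt_rpow ha.le hab (sub_pos.2 hxy)
  have hsplit : ∀ c : ℝ, 0 < c → c ^ y = c ^ x * c ^ (y - x) := fun c hc => by
    rw [← Real.rpow_add hc, add_sub_cancel]
  calc a ^ y * b ^ x = a ^ x * b ^ x * a ^ (y - x) := by rw [hsplit a ha]; ring
    _ < a ^ x * b ^ x * b ^ (y - x) := by gcongr
    _ = a ^ x * b ^ y := by rw [hsplit b hb]; ring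

theorem Finset.sum_mul_sum_lt_sum_mul_sum {ι R : Type*} [NonUnitalNonAssocSemiring R]
    [PartialOrder R] [IsOrderedCancelAddMonoid R] {s t : Finset ι} {f g : ι → R}
    (hs : s.Nonempty) (ht : t.Nonempty) (h : ∀ i ∈ s, ∀ j ∈ t, f i * g j < g i * f j) :
    (∑ i ∈ s, f i) * ∑ j ∈ t, g j < (∑ i ∈ s, g i) * ∑ j ∈ t, f j := by
  rw [sum_mul_sum, sum_mul_sum]
  exact sum_lt_sum_of_nonempty hs fun i hi => sum_lt_sum_of_nonempty ht (h i hi)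

theorem tail_share_rpow_strictMono {Γ : ℕ → ℝ} {k d : ℕ} (hΓpos : ∀ i < d, 0 < Γ i)
    (hΓmono : ∀ i j, i < j → j < d → Γ i < Γ j) (hk : 0 < k) (hkd : k < d) :
    StrictMono fun x : ℝ => (∑ l ∈ Ico k d, Γ l ^ x) / ∑ l ∈ range d, Γ l ^ x := by
  intro x y hxy
  have htotal : ∀ z : ℝ, 0 < ∑ l ∈ range d, Γ l ^ z := fun z =>
    sum_pos (fun l hl => Real.rpow_pos_of_pos (hΓpos l (mem_range.1 hl)) z)
      ⟨0, mem_range.2 (hk.trans hkd)⟩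
  have hcross : (∑ l ∈ Ico k d, Γ l ^ x) * ∑ j ∈ range k, Γ j ^ y <
      (∑ l ∈ Ico k d, Γ l ^ y) * ∑ j ∈ range k, Γ j ^ x := by
    refine sum_mul_sum_lt_sum_mul_sum ⟨k, mem_Ico.2 ⟨le_rfl, hkd⟩⟩
      ⟨0, mem_range.2 hk⟩ fun l hl j hj => ?_
    obtain ⟨hkl, hld⟩ := mem_Ico.1 hl
    have hjk := mem_range.1 hj
    have := rpow_mul_rpow_lt_rpow_mul_rpow (hΓpos j (hjk.trans hkd))
      (hΓmono j l (hjk.trans_le hkl) hld) hxy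
    linarith
  dsimp only
  rw [div_lt_div_iff₀ (htotal x) (htotal y), ← sum_range_add_sum_Ico _ hkd.le,
    ← sum_range_add_sum_Ico _ hkd.le]
  linarith

theorem compression_error_strictMono_in_alpha_general
    (d : ℕ) (Γ : ℕ → ℝ)
    (hΓpos : ∀ i < d, 0 < Γ i)
    (hΓmono : ∀ i j, i < j → j < d → Γ i < Γ j)
    (p : ℝ) (hp : 0 < p) (κ : ℝ) (hκ : κ ∈ Set.Ioo (0 : ℝ) 1)
    (k : ℕ) (hk : k = ⌈κ * d⌉₊) (hkd : k < d)
    (E : ℝ → ℝ)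
    (hE : ∀ α, E α = (∑ l ∈ Finset.Ico k d, Γ l ^ (-(p / α))) /
      (∑ l ∈ Finset.range d, Γ l ^ (-(p / α)))) :
    StrictMonoOn E (Set.Ioo (0 : ℝ) 2) := by
  have hk0 : 0 < k := by
    rw [hk, Nat.ceil_pos]
    exact mul_pos hκ.1 (Nat.cast_pos.2 (by omega))
  intro α hα β _ hαβ
  rw [hE, hE]
  exact tail_share_rpow_strictMono hΓpos hΓmono hk0 hkd
    (neg_lt_neg (div_lt_div_of_pos_left hp hα.1 hαβ))

theorem compression_error_strictMono_in_alpha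
    (d : ℕ) (hd : 1 ≤ d) (Γ : ℕ → ℝ)
    (hΓpos : ∀ i < d, 0 < Γ i)
    (hΓmono : ∀ i j, i < j → j < d → Γ i < Γ j)
    (p : ℝ) (hp : 0 < p) (κ : ℝ) (hκ : κ ∈ Set.Ioo (0 : ℝ) 1)
    (k : ℕ) (hk : k = ⌈κ * d⌉₊) (hkd : k < d)
    (E : ℝ → ℝ)
    (hE : ∀ α, E α = (∑ l ∈ Finset.Ico k d, Γ l ^ (-(p / α))) /
      (∑ l ∈ Finset.range d, Γ l ^ (-(p / α)))) :
    StrictMonoOn E (Set.Ioo (0 : ℝ) 2) :=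
  compression_error_strictMono_in_alpha_general d Γ hΓpos hΓmono p hp κ hκ k hk hkd E hE
end

section
/- For n ≥ 10 and integers 0 ≤ m ≤ n, Γ(n/2 + 1) / (Γ(m/2 + 1)·Γ((n−m)/2 + 1)) ≤ exp(⌈n/2⌉ · max(h_b(⌈m/2⌉/⌈n/2⌉), h_b(⌊m/2⌋/⌈n/2⌉))), where h_b is the binary entropy in nats. -/
/-!
Put `x = m/2`, `y = (n - m)/2` and `B(x, y) = Γ(x + y + 1) / (Γ(x + 1) Γ(y + 1))`. Since
`log Γ` is convex, `Γ(t + h) / Γ(t)` increases with `t`, so `B(x, y)` increases in `y`: if `x`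
or `y` is an integer, `B(x, y)` is at most an ordinary binomial coefficient `C(N, k)` with
`N = ⌈n/2⌉` and `k ∈ {⌊m/2⌋, ⌈m/2⌉}`. With `k + l = N`, `C(N, k) k^k l^l ≤ N^N` because the left
side is one term of the expansion of `(k + l)^N`, and `N^N = exp(N h_b(k/N)) k^k l^l`.

If `x = b + 1/2` and `y = d + 1/2`, log-convexity gives `Γ(t + 1)² ≤ (t + 1/2) Γ(t + 1/2)²`,
whence `B(x, y)² ≤ (b + 3/2)(d + 3/2) / ((b + 1)(d + 1)) · C(N, b) C(N, b + 1)`. Two adjacent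
terms of the same expansion give the sharper `(2k + 1) C(N, k) ≤ (k + 1) exp(N h_b(k/N))`;
applied to `k = b` and to `k = d`, the remaining factor `(b + 3/2)(d + 3/2) / ((2b + 1)(2d + 1))`
is at most `1` as soon as `b + d ≥ 3`.
-/

/-- Binary entropy in nats, with the convention `h_b 0 = h_b 1 = 0`. -/
noncomputable def binEnt (x : ℝ) : ℝ := -(x * Real.log x) - (1 - x) * Real.log (1 - x)

open Real

theorem ConvexOn.map_add_sub_map_le {𝕜 : Type*} [Field 𝕜] [LinearOrder 𝕜]
    [IsStrictOrderedRing 𝕜] {s : Set 𝕜} {f : 𝕜 → 𝕜} (hf : ConvexOn 𝕜 s f) {x y h : 𝕜} (hx : x ∈ s)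
    (hyh : y + h ∈ s) (hxy : x ≤ y) (hh : 0 ≤ h) : f (x + h) - f x ≤ f (y + h) - f y := by
  rcases hh.eq_or_lt with rfl | hh
  · simp
  rcases hxy.eq_or_lt with rfl | hxy
  · rfl
  have hs := hf.1.ordConnected.out hx hyh
  have left := hf.secant_mono hx (hs ⟨by linarith, by linarith⟩) hyh (by linarith) (by linarith)
    (by linarith : x + h ≤ y + h)
  have right := hf.secant_mono hyh hx (hs ⟨by linarith, by linarith⟩) (by linarith) (by linarith)
    hxy.le
  rw [← neg_div_neg_eq, neg_sub, neg_sub] at right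
  rw [← neg_div_neg_eq (f y - _), neg_sub, neg_sub, add_sub_cancel_left] at right
  rw [add_sub_cancel_left] at left
  exact (div_le_div_iff_of_pos_right hh).1 (left.trans right)

namespace Real

theorem Gamma_add_mul_Gamma_le {x y h : ℝ} (hx : 0 < x) (hxy : x ≤ y) (hh : 0 ≤ h) :
    Gamma (x + h) * Gamma y ≤ Gamma (y + h) * Gamma x := by
  have hy : 0 < y := hx.trans_le hxy
  have key := convexOn_log_Gamma.map_add_sub_map_le hx (Set.mem_Ioi.2 (by linarith)) hxy hh
  simp only [Function.comp_apply] at key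
  have hΓ {t : ℝ} (ht : 0 < t) : Gamma t ≠ 0 := (Gamma_pos_of_pos ht).ne'
  rw [← log_le_log_iff (by positivity) (by positivity), log_mul (hΓ (by linarith)) (hΓ hy),
    log_mul (hΓ (by linarith)) (hΓ hx)]
  linarith

theorem Gamma_add_one_sq_le {x : ℝ} (hx : -1 / 2 < x) :
    Gamma (x + 1) ^ 2 ≤ (x + 1 / 2) * Gamma (x + 1 / 2) ^ 2 := by
  have key := Gamma_add_mul_Gamma_le (x := x + 1 / 2) (y := x + 1) (h := 1 / 2) (by linarith)
    (by linarith) (by norm_num)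
  rw [show x + 1 / 2 + 1 / 2 = x + 1 by ring, show x + 1 + 1 / 2 = x + 1 / 2 + 1 by ring,
    Gamma_add_one (s := x + 1 / 2) (by linarith)] at key
  linarith

end Real

theorem Nat.choose_mul_pow_mul_pow_le (k l : ℕ) :
    (k + l).choose k * (k ^ k * l ^ l) ≤ (k + l) ^ (k + l) := by
  have hterm := Finset.single_le_sum (f := fun i ↦ k ^ i * l ^ (k + l - i) * (k + l).choose i)
    (fun _ _ ↦ Nat.zero_le _) (Finset.mem_range.2 (by omega : k < k + l + 1))
  rw [Nat.add_sub_cancel_left] at hterm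
  rw [add_pow]
  simpa only [Nat.cast_id, mul_comm, mul_left_comm] using hterm

theorem Nat.two_mul_add_one_mul_choose_mul_pow_mul_pow_le (k : ℕ) {l : ℕ} (hl : 0 < l) :
    (2 * k + 1) * ((k + l).choose k * (k ^ k * l ^ l)) ≤ (k + 1) * (k + l) ^ (k + l) := by
  obtain ⟨l, rfl⟩ : ∃ l', l = l' + 1 := ⟨l - 1, by omega⟩
  set n := k + (l + 1)
  -- `(k + 1)` times the term `i = k + 1` of the expansion of `(k + (l + 1)) ^ n` is `k` times
  -- the term `i = k`
  have hsucc : n.choose (k + 1) * (k + 1) = n.choose k * (l + 1) := by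
    rw [Nat.choose_succ_right_eq]; congr 1; omega
  have hpair := Finset.sum_le_sum_of_subset (f := fun i ↦ k ^ i * (l + 1) ^ (n - i) * n.choose i)
    (by intro i hi; simp at hi ⊢; omega : ({k, k + 1} : Finset ℕ) ⊆ Finset.range (n + 1))
  have hexp : ∑ i ∈ Finset.range (n + 1), k ^ i * (l + 1) ^ (n - i) * n.choose i = n ^ n := by
    rw [add_pow]; simp only [Nat.cast_id]
  rw [hexp, Finset.sum_pair (by omega), show n - k = l + 1 by omega,
    show n - (k + 1) = l by omega] at hpair
  calc (2 * k + 1) * (n.choose k * (k ^ k * (l + 1) ^ (l + 1)))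
      = (k + 1) * (k ^ k * (l + 1) ^ (l + 1) * n.choose k)
          + k ^ (k + 1) * (l + 1) ^ l * (n.choose (k + 1) * (k + 1)) := by rw [hsucc]; ring
    _ ≤ (k + 1) * n ^ n := by nlinarith

theorem binEnt_eq_binEntropy : binEnt = binEntropy := by
  ext x; simp only [binEnt, binEntropy, log_inv]; ring

namespace Real

theorem exp_natCast_mul_log (k : ℕ) : exp (k * log k) = (k : ℝ) ^ k := by
  rcases eq_or_ne k 0 with rfl | hk
  · simp
  rw [← log_pow, exp_log (by positivity)]

theorem binEntropy_div_add_comm (x y : ℝ) :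
    binEntropy (x / (x + y)) = binEntropy (y / (x + y)) := by
  rcases eq_or_ne (x + y) 0 with h | h
  · simp [h]
  rw [← binEntropy_one_sub, one_sub_div h, add_sub_cancel_left]

theorem exp_mul_binEntropy (k l : ℕ) :
    exp ((k + l) * binEntropy (k / (k + l))) = ((k : ℝ) + l) ^ (k + l) / (k ^ k * l ^ l) := by
  rcases Nat.eq_zero_or_pos (k + l) with hkl | hkl
  · obtain ⟨rfl, rfl⟩ : k = 0 ∧ l = 0 := by omega
    simp
  have hn : (k : ℝ) + l ≠ 0 := by exact_mod_cast hkl.ne'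
  have hmul_log (i : ℕ) : ((k : ℝ) + l) * (i / (k + l) * log (i / (k + l)))
      = i * log i - i * log (k + l) := by
    rcases eq_or_ne i 0 with rfl | hi
    · simp
    rw [log_div (by positivity) hn]; field_simp
  have hq : 1 - (k : ℝ) / (k + l) = l / (k + l) := by field_simp; ring
  have hent : ((k : ℝ) + l) * binEntropy (k / (k + l))
      = ((k + l : ℕ) : ℝ) * log ((k + l : ℕ) : ℝ) - k * log k - l * log l := by
    rw [binEntropy, log_inv, log_inv, hq]
    push_cast
    linear_combination (-1 : ℝ) * hmul_log k - hmul_log l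
  rw [hent, exp_sub, exp_sub, exp_natCast_mul_log, exp_natCast_mul_log, exp_natCast_mul_log,
    div_div]
  push_cast; rfl

theorem natCast_choose_le_exp_mul_binEntropy (k l : ℕ) :
    ((k + l).choose k : ℝ) ≤ exp ((k + l) * binEntropy (k / (k + l))) := by
  rw [exp_mul_binEntropy,
    le_div_iff₀ (by exact_mod_cast Nat.mul_pos Nat.pow_self_pos Nat.pow_self_pos)]
  exact_mod_cast Nat.choose_mul_pow_mul_pow_le k l

theorem two_mul_add_one_mul_choose_le_mul_exp_mul_binEntropy (k : ℕ) {l : ℕ} (hl : 0 < l) :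
    (2 * k + 1) * ((k + l).choose k : ℝ) ≤ (k + 1) * exp ((k + l) * binEntropy (k / (k + l))) := by
  rw [exp_mul_binEntropy, mul_div_assoc',
    le_div_iff₀ (by exact_mod_cast Nat.mul_pos Nat.pow_self_pos Nat.pow_self_pos), mul_assoc]
  exact_mod_cast Nat.two_mul_add_one_mul_choose_mul_pow_mul_pow_le k hl

end Real

noncomputable def gammaBinom (x y : ℝ) : ℝ := Gamma (x + y + 1) / (Gamma (x + 1) * Gamma (y + 1))

theorem gammaBinom_comm (x y : ℝ) : gammaBinom x y = gammaBinom y x := by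
  rw [gammaBinom, gammaBinom, add_comm x y, mul_comm]

theorem gammaBinom_natCast (k l : ℕ) : gammaBinom k l = (k + l).choose k := by
  rw [gammaBinom, Nat.cast_choose ℝ (Nat.le_add_right k l), Nat.add_sub_cancel_left,
    ← Nat.cast_add, Gamma_nat_eq_factorial, Gamma_nat_eq_factorial, Gamma_nat_eq_factorial]

theorem gammaBinom_mono_right {x y y' : ℝ} (hx : 0 ≤ x) (hy : -1 < y) (hyy' : y ≤ y') :
    gammaBinom x y ≤ gammaBinom x y' := by
  have key := Gamma_add_mul_Gamma_le (h := x) (by linarith : 0 < y + 1)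
    (by linarith : y + 1 ≤ y' + 1) hx
  rw [show y + 1 + x = x + y + 1 by ring, show y' + 1 + x = x + y' + 1 by ring] at key
  have hΓ {t : ℝ} (ht : -1 < t) : 0 < Gamma (t + 1) := Gamma_pos_of_pos (by linarith)
  have hx1 := hΓ (t := x) (by linarith)
  rw [gammaBinom, gammaBinom,
    div_le_div_iff₀ (mul_pos hx1 (hΓ hy)) (mul_pos hx1 (hΓ (by linarith)))]
  calc Gamma (x + y + 1) * (Gamma (x + 1) * Gamma (y' + 1))
      = Gamma (x + 1) * (Gamma (x + y + 1) * Gamma (y' + 1)) := by ring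
    _ ≤ Gamma (x + 1) * (Gamma (x + y' + 1) * Gamma (y + 1)) := by gcongr
    _ = Gamma (x + y' + 1) * (Gamma (x + 1) * Gamma (y + 1)) := by ring

theorem gammaBinom_add_half_add_half_sq_le {x y : ℝ} (hx : -1 < x) (hy : -1 < y) :
    gammaBinom (x + 1 / 2) (y + 1 / 2) ^ 2 ≤
      (x + 3 / 2) * (y + 3 / 2) / ((x + 1) * (y + 1)) *
        (gammaBinom x (y + 1) * gammaBinom (x + 1) y) := by
  have hΓ {t : ℝ} (ht : -1 < t) : 0 < Gamma (t + 1) := Gamma_pos_of_pos (by linarith)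
  have hsq {t : ℝ} (ht : -1 < t) :
      ((t + 1) * Gamma (t + 1)) ^ 2 / (t + 3 / 2) ≤ Gamma (t + 1 / 2 + 1) ^ 2 := by
    have key := Gamma_add_one_sq_le (x := t + 1) (by linarith)
    rw [Gamma_add_one (by linarith), show t + 1 + 1 / 2 = t + 1 / 2 + 1 by ring] at key
    rw [div_le_iff₀ (by linarith)]
    linarith
  have hpos {t : ℝ} (ht : -1 < t) : 0 < ((t + 1) * Gamma (t + 1)) ^ 2 / (t + 3 / 2) :=
    div_pos (pow_pos (mul_pos (by linarith) (hΓ ht)) 2) (by linarith)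
  have hrhs : (x + 3 / 2) * (y + 3 / 2) / ((x + 1) * (y + 1)) *
        (gammaBinom x (y + 1) * gammaBinom (x + 1) y) = Gamma (x + y + 1 + 1) ^ 2 /
      (((x + 1) * Gamma (x + 1)) ^ 2 / (x + 3 / 2) *
        (((y + 1) * Gamma (y + 1)) ^ 2 / (y + 3 / 2))) := by
    rw [gammaBinom, gammaBinom, Gamma_add_one (s := y + 1) (by linarith),
      Gamma_add_one (s := x + 1) (by linarith)]
    field_simp
    ring_nf
  rw [hrhs, gammaBinom, div_pow, mul_pow,
    show x + 1 / 2 + (y + 1 / 2) + 1 = x + y + 1 + 1 by ring]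
  exact div_le_div_of_nonneg_left (sq_nonneg _) (mul_pos (hpos hx) (hpos hy))
    (mul_le_mul (hsq hx) (hsq hy) (hpos hy).le (sq_nonneg _))

theorem gammaBinom_natCast_le_exp_binEntropy (k l : ℕ) :
    gammaBinom k l ≤ exp ((k + l) * binEntropy (k / (k + l))) :=
  (gammaBinom_natCast k l).trans_le (natCast_choose_le_exp_mul_binEntropy k l)

theorem gammaBinom_natCast_add_half_le_exp_binEntropy (k l : ℕ) :
    gammaBinom k (l + 1 / 2) ≤ exp ((k + l + 1) * binEntropy (k / (k + l + 1))) := by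
  have key := gammaBinom_natCast_le_exp_binEntropy k (l + 1)
  push_cast at key
  rw [← add_assoc] at key
  have hl : (0 : ℝ) ≤ l := l.cast_nonneg
  exact (gammaBinom_mono_right (y' := l + 1) k.cast_nonneg (by linarith) (by linarith)).trans key

theorem gammaBinom_add_half_natCast_le_exp_binEntropy (k l : ℕ) :
    gammaBinom (k + 1 / 2) l ≤ exp ((k + l + 1) * binEntropy ((k + 1) / (k + l + 1))) := by
  rw [gammaBinom_comm]
  convert gammaBinom_natCast_add_half_le_exp_binEntropy l k using 3
  · ring
  · rw [show (l : ℝ) + k + 1 = l + (k + 1) by ring, binEntropy_div_add_comm]; ring_nf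

theorem gammaBinom_add_half_add_half_le_exp_binEntropy (b d : ℕ) (hbd : 3 ≤ b + d) :
    gammaBinom (b + 1 / 2) (d + 1 / 2) ≤
      exp ((b + d + 1) *
        max (binEntropy ((b + 1) / (b + d + 1))) (binEntropy (b / (b + d + 1)))) := by
  set M := exp ((b + d + 1) *
    max (binEntropy ((b + 1) / (b + d + 1))) (binEntropy (b / (b + d + 1))))
  have hC₀ : (2 * b + 1) * gammaBinom b (d + 1) ≤ (b + 1) * M := by
    have key := two_mul_add_one_mul_choose_le_mul_exp_mul_binEntropy b (l := d + 1) (by omega)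
    rw [← gammaBinom_natCast] at key
    push_cast at key
    refine key.trans (mul_le_mul_of_nonneg_left (exp_le_exp.2 ?_) (by positivity))
    rw [← add_assoc]
    exact mul_le_mul_of_nonneg_left (le_max_right _ _) (by positivity)
  have hC₁ : (2 * d + 1) * gammaBinom (b + 1) d ≤ (d + 1) * M := by
    have key := two_mul_add_one_mul_choose_le_mul_exp_mul_binEntropy d (l := b + 1) (by omega)
    rw [← gammaBinom_natCast, gammaBinom_comm, binEntropy_div_add_comm] at key
    push_cast at key
    refine key.trans (mul_le_mul_of_nonneg_left (exp_le_exp.2 ?_) (by positivity))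
    rw [show (d : ℝ) + (b + 1) = b + d + 1 by ring]
    exact mul_le_mul_of_nonneg_left (le_max_left _ _) (by positivity)
  have hb : (0 : ℝ) ≤ b := b.cast_nonneg
  have hd : (0 : ℝ) ≤ d := d.cast_nonneg
  have hfactor : ((b : ℝ) + 3 / 2) * (d + 3 / 2) ≤ (2 * b + 1) * (2 * d + 1) := by
    have : (3 : ℝ) ≤ b + d := by exact_mod_cast hbd
    nlinarith [mul_nonneg hb hd]
  have hG : 0 ≤ gammaBinom (b + 1 / 2) (d + 1 / 2) := by unfold gammaBinom; positivity
  have h₀ : 0 ≤ gammaBinom b (d + 1) := by unfold gammaBinom; positivity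
  have h₁ : 0 ≤ gammaBinom (b + 1) d := by unfold gammaBinom; positivity
  rw [← pow_le_pow_iff_left₀ hG (exp_pos _).le two_ne_zero]
  refine (gammaBinom_add_half_add_half_sq_le (by linarith) (by linarith)).trans ?_
  rw [div_mul_eq_mul_div, div_le_iff₀ (by positivity)]
  nlinarith [mul_le_mul hC₀ hC₁ (by positivity) (by positivity), mul_nonneg h₀ h₁]

theorem Nat.cast_two_mul_div_two (b : ℕ) : ((2 * b : ℕ) : ℝ) / 2 = b := by push_cast; ring

theorem Nat.cast_two_mul_add_one_div_two (b : ℕ) : ((2 * b + 1 : ℕ) : ℝ) / 2 = b + 1 / 2 := by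
  push_cast; ring

theorem Int.ceil_natCast_div_two (n : ℕ) : ⌈(n : ℝ) / 2⌉ = ((n + 1) / 2 : ℕ) := by
  obtain ⟨q, hq⟩ : ∃ q, q = (n + 1) / 2 := ⟨_, rfl⟩
  have h₁ : (n : ℝ) ≤ 2 * q := by exact_mod_cast (by omega : n ≤ 2 * q)
  have h₂ : 2 * (q : ℝ) ≤ n + 1 := by exact_mod_cast (by omega : 2 * q ≤ n + 1)
  rw [← hq, Int.ceil_eq_iff, Int.cast_natCast]
  constructor <;> linarith

theorem Int.floor_natCast_div_two (n : ℕ) : ⌊(n : ℝ) / 2⌋ = (n / 2 : ℕ) := by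
  obtain ⟨q, hq⟩ : ∃ q, q = n / 2 := ⟨_, rfl⟩
  have h₁ : 2 * (q : ℝ) ≤ n := by exact_mod_cast (by omega : 2 * q ≤ n)
  have h₂ : (n : ℝ) < 2 * q + 2 := by exact_mod_cast (by omega : n < 2 * q + 2)
  rw [← hq, Int.floor_eq_iff, Int.cast_natCast]
  constructor <;> linarith

theorem Gamma_ratio_entropy_bound (n m : ℕ) (hn : 10 ≤ n) (hmn : m ≤ n) :
    Real.Gamma ((n : ℝ) / 2 + 1) /
      (Real.Gamma ((m : ℝ) / 2 + 1) * Real.Gamma (((n : ℝ) - m) / 2 + 1)) ≤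
    Real.exp ((⌈(n : ℝ) / 2⌉ : ℝ) *
      max (binEnt ((⌈(m : ℝ) / 2⌉ : ℝ) / (⌈(n : ℝ) / 2⌉ : ℝ)))
          (binEnt ((⌊(m : ℝ) / 2⌋ : ℝ) / (⌈(n : ℝ) / 2⌉ : ℝ)))) := by
  obtain ⟨j, rfl⟩ := Nat.exists_eq_add_of_le hmn
  rw [show Gamma (((m + j : ℕ) : ℝ) / 2 + 1) /
      (Gamma ((m : ℝ) / 2 + 1) * Gamma ((((m + j : ℕ) : ℝ) - m) / 2 + 1)) =
      gammaBinom (m / 2) (j / 2) by rw [gammaBinom]; push_cast; ring_nf,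
    binEnt_eq_binEntropy, Int.ceil_natCast_div_two, Int.ceil_natCast_div_two,
    Int.floor_natCast_div_two]
  simp only [Int.cast_natCast]
  obtain ⟨b, rfl | rfl⟩ := Nat.even_or_odd' m <;> obtain ⟨c, rfl | rfl⟩ := Nat.even_or_odd' j
  · rw [show (2 * b + 2 * c + 1) / 2 = b + c by omega, show (2 * b + 1) / 2 = b by omega,
      show 2 * b / 2 = b by omega, max_self, Nat.cast_two_mul_div_two, Nat.cast_two_mul_div_two]
    exact_mod_cast gammaBinom_natCast_le_exp_binEntropy b c
  · rw [show (2 * b + (2 * c + 1) + 1) / 2 = b + c + 1 by omega, show (2 * b + 1) / 2 = b by omega,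
      show 2 * b / 2 = b by omega, max_self, Nat.cast_two_mul_div_two,
      Nat.cast_two_mul_add_one_div_two]
    exact_mod_cast gammaBinom_natCast_add_half_le_exp_binEntropy b c
  · rw [show (2 * b + 1 + 2 * c + 1) / 2 = b + c + 1 by omega,
      show (2 * b + 1 + 1) / 2 = b + 1 by omega, show (2 * b + 1) / 2 = b by omega,
      Nat.cast_two_mul_div_two, Nat.cast_two_mul_add_one_div_two]
    push_cast
    exact (gammaBinom_add_half_natCast_le_exp_binEntropy b c).trans
      (exp_le_exp.2 (mul_le_mul_of_nonneg_left (le_max_left _ _) (by positivity)))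
  · rw [show (2 * b + 1 + (2 * c + 1) + 1) / 2 = b + c + 1 by omega,
      show (2 * b + 1 + 1) / 2 = b + 1 by omega, show (2 * b + 1) / 2 = b by omega,
      Nat.cast_two_mul_add_one_div_two, Nat.cast_two_mul_add_one_div_two]
    push_cast
    exact gammaBinom_add_half_add_half_le_exp_binEntropy b c (by omega)
end

section
/- Let x = (x_1, ..., x_d) be a vector of i.i.d. copies of a real random variable X with E|X|^α = ∞ for some α > 0. Then for all p ≥ α, κ ∈ (0,1], and any sequence k_d with k_d/d → κ, almost surely lim_{d→∞} ‖x^{(k_d)} − x‖_p / ‖x‖_p = 0. -/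
/-!
Fix a level `M` exceeded by `|X|^p` with probability less than `κ`. By the strong law of large
numbers applied to the indicators of `{M < |X_i|^p}`, eventually fewer than `k_d` of the first `d`
entries exceed `M`, so the best `k_d`-term approximation keeps all of them and its `p`-th power
error is at most `d M`. As `p ≥ α`, also `E|X|^p = ∞`, and the strong law applied to the
truncations `min(|X_i|^p, C)` shows `‖x‖_p^p / d → ∞`. Hence the relative error is at most
`(d M / ‖x‖_p^p)^{1/p} → 0`.
-/

open MeasureTheory ProbabilityTheory Filter Finset

/-- Sum of the `min k d` largest values of `|v i| ^ p`:
the supremum of `∑_{i ∈ S} |v i|^p` over subsets `S` of cardinality `min k d`. -/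
noncomputable def topKSum (p : ℝ) {d : ℕ} (v : Fin d → ℝ) (k : ℕ) : ℝ :=
  sSup ((fun S : Finset (Fin d) => ∑ i ∈ S, |v i| ^ p) ''
    {S : Finset (Fin d) | S.card = min k d})

/-- Relative `ℓ_p` error of the best `k`-term approximation of `v`. -/
noncomputable def relBestKErr (p : ℝ) {d : ℕ} (v : Fin d → ℝ) (k : ℕ) : ℝ :=
  ((∑ i, |v i| ^ p) - topKSum p v k) ^ (1 / p) / (∑ i, |v i| ^ p) ^ (1 / p)

open Function

section BestTermApproximation

variable {p : ℝ} {d : ℕ} (v : Fin d → ℝ) (k : ℕ)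

lemma topKSum_le_sum : topKSum p v k ≤ ∑ i, |v i| ^ p :=
  Real.sSup_le (by
    rintro _ ⟨S, -, rfl⟩
    exact sum_le_sum_of_subset_of_nonneg (subset_univ S) fun i _ _ => by positivity)
    (by positivity)

lemma relBestKErr_nonneg : 0 ≤ relBestKErr p v k :=
  div_nonneg (Real.rpow_nonneg (sub_nonneg.2 (topKSum_le_sum v k)) _) (by positivity)

/-- Keeping every entry with `|v i| ^ p > M` leaves at most `d` entries, each of size `≤ M`. -/
lemma sum_sub_topKSum_le {M : ℝ} (hM : 0 ≤ M) (hcard : #{i | M < |v i| ^ p} ≤ k) :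
    (∑ i, |v i| ^ p) - topKSum p v k ≤ d * M := by
  set E : Finset (Fin d) := {i | M < |v i| ^ p}
  have hEcard : #E ≤ min k d := le_min hcard (by simpa using card_le_univ E)
  obtain ⟨S, hES, hScard⟩ := exists_superset_card_eq hEcard (by simp)
  have hS : ∑ i ∈ S, |v i| ^ p ≤ topKSum p v k :=
    le_csSup ((Set.toFinite _).image _).bddAbove ⟨S, hScard, rfl⟩
  have hsmall : ∀ i ∈ Sᶜ, |v i| ^ p ≤ M := fun i hi =>
    not_lt.1 fun hlt => mem_compl.1 hi (hES (by simp [E, hlt]))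
  calc (∑ i, |v i| ^ p) - topKSum p v k ≤ ∑ i ∈ Sᶜ, |v i| ^ p := by
        linarith [sum_add_sum_compl S fun i => |v i| ^ p]
    _ ≤ #Sᶜ * M := by simpa using sum_le_sum hsmall
    _ ≤ d * M := by
        gcongr
        simpa using card_le_univ Sᶜ

lemma relBestKErr_le {M : ℝ} (hp : 0 < p) (hM : 0 ≤ M) (hcard : #{i | M < |v i| ^ p} ≤ k)
    (hpos : 0 < ∑ i, |v i| ^ p) :
    relBestKErr p v k ≤ (d * M / ∑ i, |v i| ^ p) ^ (1 / p) := by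
  rw [relBestKErr, Real.div_rpow (by positivity) hpos.le]
  gcongr
  · exact sub_nonneg.2 (topKSum_le_sum v k)
  · exact sum_sub_topKSum_le v k hM hcard

end BestTermApproximation

lemma card_filter_fin_eq_card_filter_range (P : ℕ → Prop) [DecidablePred P] (n : ℕ) :
    #{i : Fin n | P i} = #{i ∈ range n | P i} := by
  rw [card_filter, card_filter]
  exact Fin.sum_univ_eq_sum_range (fun i => if P i then 1 else 0) n

lemma eventually_le_of_tendsto_div {a b : ℕ → ℕ} {q κ : ℝ}
    (ha : Tendsto (fun n => (a n : ℝ) / n) atTop (nhds q))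
    (hb : Tendsto (fun n => (b n : ℝ) / n) atTop (nhds κ)) (hqκ : q < κ) :
    ∀ᶠ n in atTop, a n ≤ b n := by
  filter_upwards [ha.eventually_lt hb hqκ, eventually_gt_atTop 0] with n hlt hn
  exact_mod_cast ((div_lt_div_iff_of_pos_right (by positivity)).1 hlt).le

theorem tendsto_relBestKErr_zero {p M : ℝ} (hp : 0 < p) (hM : 0 ≤ M) {x : ℕ → ℝ} {k : ℕ → ℕ}
    (hsum : Tendsto (fun d : ℕ => (∑ i ∈ range d, |x i| ^ p) / d) atTop atTop)
    (hcard : ∀ᶠ d in atTop, #{i ∈ range d | M < |x i| ^ p} ≤ k d) :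
    Tendsto (fun d => relBestKErr p (fun i : Fin d => x i) (k d)) atTop (nhds 0) := by
  have hbound := ((tendsto_const_nhds (x := M)).div_atTop hsum).rpow_const
    (p := 1 / p) (Or.inr (one_div_pos.2 hp).le)
  rw [Real.zero_rpow (one_div_pos.2 hp).ne'] at hbound
  refine squeeze_zero' (.of_forall fun d => relBestKErr_nonneg _ _) ?_ hbound
  filter_upwards [hcard, hsum.eventually_gt_atTop 0, eventually_gt_atTop 0] with d hd hpos hd0
  have hsum_fin : ∑ i : Fin d, |x i| ^ p = ∑ i ∈ range d, |x i| ^ p :=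
    Fin.sum_univ_eq_sum_range (fun i => |x i| ^ p) d
  have hpos' : 0 < ∑ i ∈ range d, |x i| ^ p := by
    simpa using (div_pos_iff_of_pos_right (by positivity : (0 : ℝ) < d)).1 hpos
  have hd' := (card_filter_fin_eq_card_filter_range (fun i => M < |x i| ^ p) d).trans_le hd
  have := relBestKErr_le (fun i : Fin d => x i) (k d) hp hM hd' (hsum_fin ▸ hpos')
  rwa [div_div_eq_mul_div, mul_comm M, ← hsum_fin]

section Probability

variable {Ω : Type*} [MeasurableSpace Ω] {μ : Measure Ω} [IsFiniteMeasure μ]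

lemma tendsto_measureReal_lt_atTop {f : Ω → ℝ} (hf : AEMeasurable f μ) :
    Tendsto (fun r : ℝ => μ.real {ω | r < f ω}) atTop (nhds 0) := by
  have hempty : ⋂ r : ℝ, {ω | r < f ω} = ∅ :=
    Set.eq_empty_of_forall_notMem fun ω hω => lt_irrefl (f ω) (Set.mem_iInter.1 hω (f ω))
  have h := tendsto_measure_iInter_atTop (μ := μ)
    (fun r => nullMeasurableSet_lt aemeasurable_const hf)
    (fun r s hrs ω (hω : s < f ω) => hrs.trans_lt hω) ⟨0, measure_ne_top μ _⟩
  rw [hempty, measure_empty] at h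
  exact (ENNReal.tendsto_toReal ENNReal.zero_ne_top).comp h

lemma integrable_min_const {f : Ω → ℝ} (hf : AEMeasurable f μ) (h0 : 0 ≤ᵐ[μ] f) (c : ℝ) :
    Integrable (fun ω => min (f ω) c) μ :=
  .of_bound (hf.min aemeasurable_const).aestronglyMeasurable |c| <| h0.mono fun ω hω => by
    rcases le_total (f ω) c with h | h
    · rw [min_eq_left h, Real.norm_eq_abs, abs_of_nonneg hω]
      exact h.trans (le_abs_self c)
    · rw [min_eq_right h, Real.norm_eq_abs]

/-- By monotone convergence, `∫ min f n` tends to `∫⁻ f = ∞`. -/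
lemma tendsto_integral_min_atTop {f : Ω → ℝ} (hf : AEMeasurable f μ) (h0 : 0 ≤ᵐ[μ] f)
    (hint : ¬Integrable f μ) :
    Tendsto (fun n : ℕ => ∫ ω, min (f ω) n ∂μ) atTop atTop := by
  rw [← ENNReal.tendsto_ofReal_nhds_top]
  have hlint : ∫⁻ ω, ENNReal.ofReal (f ω) ∂μ = ⊤ := by
    by_contra h
    exact hint ((lintegral_ofReal_ne_top_iff_integrable hf.aestronglyMeasurable h0).1 h)
  have hmono : ∀ ω, Monotone fun n : ℕ => ENNReal.ofReal (min (f ω) n) := fun ω m n hmn =>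
    ENNReal.ofReal_le_ofReal (min_le_min_left _ (Nat.cast_le.2 hmn))
  have hlim : ∀ ω, Tendsto (fun n : ℕ => ENNReal.ofReal (min (f ω) n)) atTop
      (nhds (ENNReal.ofReal (f ω))) := fun ω =>
    tendsto_const_nhds.congr' <| (tendsto_natCast_atTop_atTop.eventually_ge_atTop (f ω)).mono
      fun n hn => by simp only [min_eq_left hn]
  have h := lintegral_tendsto_of_tendsto_of_monotone
    (fun n => (hf.min aemeasurable_const).ennreal_ofReal) (.of_forall hmono) (.of_forall hlim)
  rw [hlint] at h
  refine h.congr fun n =>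
    (ofReal_integral_eq_lintegral_ofReal (integrable_min_const hf h0 n) ?_).symm
  filter_upwards [h0] with ω hω using le_min hω n.cast_nonneg

variable {Y : ℕ → Ω → ℝ}

theorem ae_tendsto_card_filter_lt_div (hindep : Pairwise ((· ⟂ᵢ[μ] ·) on Y))
    (hident : ∀ i, IdentDistrib (Y i) (Y 0) μ μ) (r : ℝ) :
    ∀ᵐ ω ∂μ, Tendsto (fun n : ℕ => (#{i ∈ range n | r < Y i ω} : ℝ) / n) atTop
      (nhds (μ.real {ω | r < Y 0 ω})) := by
  have hg : Measurable fun t : ℝ => if r < t then (1 : ℝ) else 0 :=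
    Measurable.ite measurableSet_Ioi measurable_const measurable_const
  have hY0 : AEMeasurable (Y 0) μ := (hident 0).aemeasurable_fst
  have hindicator :
      (fun ω => if r < Y 0 ω then (1 : ℝ) else 0) = {ω | r < Y 0 ω}.indicator 1 := by
    ext ω
    simp [Set.indicator_apply]
  have hint : Integrable (fun ω => if r < Y 0 ω then (1 : ℝ) else 0) μ := by
    rw [hindicator]
    exact (integrable_const 1).indicator₀ (nullMeasurableSet_lt aemeasurable_const hY0)
  have hmean : ∫ ω, (if r < Y 0 ω then (1 : ℝ) else 0) ∂μ = μ.real {ω | r < Y 0 ω} := by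
    rw [hindicator, integral_indicator₀ (nullMeasurableSet_lt aemeasurable_const hY0)]
    simp
  have h := strong_law_ae_real (fun i ω => if r < Y i ω then (1 : ℝ) else 0) hint
    (fun i j hij => (hindep hij).comp hg hg) (fun i => (hident i).comp hg)
  simpa only [hmean, natCast_card_filter] using h

theorem ae_tendsto_sum_div_atTop (hindep : Pairwise ((· ⟂ᵢ[μ] ·) on Y))
    (hident : ∀ i, IdentDistrib (Y i) (Y 0) μ μ) (h0 : 0 ≤ᵐ[μ] Y 0) (hint : ¬Integrable (Y 0) μ) :
    ∀ᵐ ω ∂μ, Tendsto (fun n : ℕ => (∑ i ∈ range n, Y i ω) / n) atTop atTop := by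
  have hY0 : AEMeasurable (Y 0) μ := (hident 0).aemeasurable_fst
  have hg : ∀ c : ℝ, Measurable fun t : ℝ => min t c := fun c => measurable_id.min measurable_const
  have hslln : ∀ᵐ ω ∂μ, ∀ C : ℕ, Tendsto (fun n : ℕ => (∑ i ∈ range n, min (Y i ω) C) / n)
      atTop (nhds (∫ ω, min (Y 0 ω) C ∂μ)) :=
    ae_all_iff.2 fun C => strong_law_ae_real (fun i ω => min (Y i ω) C)
      (integrable_min_const hY0 h0 C) (fun i j hij => (hindep hij).comp (hg C) (hg C))
      (fun i => (hident i).comp (hg C))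
  filter_upwards [hslln] with ω hω
  refine tendsto_atTop.2 fun A => ?_
  obtain ⟨C, hC⟩ := ((tendsto_integral_min_atTop hY0 h0 hint).eventually_gt_atTop A).exists
  filter_upwards [(hω C).eventually_const_lt hC] with n hn
  exact hn.le.trans (div_le_div_of_nonneg_right (sum_le_sum fun i _ => min_le_left _ _)
    n.cast_nonneg)

end Probability

theorem heavyTailed_iid_compressible_general
    {Ω : Type*} [MeasurableSpace Ω] (μ : Measure Ω) [IsProbabilityMeasure μ]
    (X : ℕ → Ω → ℝ)
    (hindep : iIndepFun X μ)
    (hident : ∀ i, IdentDistrib (X i) (X 0) μ μ)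
    (α : ℝ) (hα : 0 < α)
    (hheavy : ¬ Integrable (fun ω => |X 0 ω| ^ α) μ) :
    ∀ p : ℝ, α ≤ p → ∀ κ : ℝ, κ ∈ Set.Ioc (0 : ℝ) 1 →
    ∀ k : ℕ → ℕ, Tendsto (fun d => (k d : ℝ) / d) atTop (nhds κ) →
    ∀ᵐ ω ∂μ, Tendsto (fun d => relBestKErr p (fun i : Fin d => X i ω) (k d))
      atTop (nhds 0) := by
  intro p hαp κ hκ k hk
  have hp : 0 < p := hα.trans_le hαp
  have hg : Measurable fun t : ℝ => |t| ^ p := by fun_prop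
  have hX0 : AEMeasurable (X 0) μ := (hident 0).aemeasurable_fst
  have hYindep : Pairwise ((· ⟂ᵢ[μ] ·) on fun i ω => |X i ω| ^ p) :=
    fun i j hij => (hindep.indepFun hij).comp hg hg
  have hYident (i : ℕ) : IdentDistrib (fun ω => |X i ω| ^ p) (fun ω => |X 0 ω| ^ p) μ μ :=
    (hident i).comp hg
  have hYint : ¬Integrable (fun ω => |X 0 ω| ^ p) μ := fun h => hheavy <| by
    simpa using integrable_norm_rpow_of_le hX0.aestronglyMeasurable hα.le hp.le hαp (by simpa)
  have htail := tendsto_measureReal_lt_atTop (hg.comp_aemeasurable hX0)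
  obtain ⟨M, hMκ, hM⟩ := ((htail.eventually_lt_const hκ.1).and (eventually_ge_atTop 0)).exists
  filter_upwards [ae_tendsto_card_filter_lt_div hYindep hYident M,
    ae_tendsto_sum_div_atTop hYindep hYident (.of_forall fun ω => by positivity) hYint]
    with ω hfreq hsum
  have hcard := eventually_le_of_tendsto_div (a := fun n => #{i ∈ range n | M < |X i ω| ^ p})
    hfreq hk hMκ
  exact tendsto_relBestKErr_zero (x := fun i => X i ω) hp hM hsum hcard

theorem heavyTailed_iid_compressible
    {Ω : Type*} [MeasurableSpace Ω] (μ : Measure Ω) [IsProbabilityMeasure μ]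
    (X : ℕ → Ω → ℝ) (hmeas : ∀ i, Measurable (X i))
    (hindep : iIndepFun X μ)
    (hident : ∀ i, IdentDistrib (X i) (X 0) μ μ)
    (α : ℝ) (hα : 0 < α)
    (hheavy : ¬ Integrable (fun ω => |X 0 ω| ^ α) μ) :
    ∀ p : ℝ, α ≤ p → ∀ κ : ℝ, κ ∈ Set.Ioc (0 : ℝ) 1 →
    ∀ k : ℕ → ℕ, Tendsto (fun d => (k d : ℝ) / d) atTop (nhds κ) →
    ∀ᵐ ω ∂μ, Tendsto (fun d => relBestKErr p (fun i : Fin d => X i ω) (k d))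
      atTop (nhds 0) :=
  heavyTailed_iid_compressible_general μ X hindep hident α hα hheavy
end

section
/- Let x = (x_1, ..., x_d) where for l = 1,...,L the block x_l ∈ R^{d_l} has i.i.d. symmetric α_l-stable entries with scale parameters normalized so that the tail bound P(|x_{l,i}| ≥ a) ≤ 4·(3σ_l/a)^{α_l} holds for a ≥ 4σ_l/(2−α_l), with α_l ∈ (1,2) and the blocks independent. Set σ² = Σ_l (d_l/d) σ_l² and α = min_l α_l. Then for every δ < 2d(2 − max_l α_l)^α, P(‖x‖ ≥ 3σ√d·(4d/δ)^{1/α}) ≤ δ. -/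
/-! If every coordinate satisfied `|x_{l,i}| < 3 c σ_l` with `c = (4d/δ)^{1/α}`, the squared norm
would stay below `∑_l d_l (3 c σ_l)² = (3 σ √d c)²`. So the event is covered by the `d` coordinate
events, each of probability at most `4 c^{-α_l} ≤ 4 c^{-α} = δ/d` by the stable tail bound. The
condition on `δ` gives `c ≥ 4 / (3 (2 - max_l α_l))`, which puts `3 c σ_l` in the range where the
tail bound applies. -/

open MeasureTheory ProbabilityTheory Finset

theorem measure_sum_ge_le_sum_measure {Ω ι : Type*} [MeasurableSpace Ω] [Fintype ι] [Nonempty ι]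
    (μ : Measure Ω) (y : ι → Ω → ℝ) (a : ι → ℝ) :
    μ {ω | ∑ i, a i ≤ ∑ i, y i ω} ≤ ∑ i, μ {ω | a i ≤ y i ω} := by
  calc μ {ω | ∑ i, a i ≤ ∑ i, y i ω} ≤ μ (⋃ i, {ω | a i ≤ y i ω}) := measure_mono fun ω hω => ?_
    _ ≤ ∑ i, μ {ω | a i ≤ y i ω} := measure_iUnion_fintype_le μ _
  by_contra hω'
  simp only [Set.mem_iUnion, Set.mem_ofPred_eq, not_exists, not_le] at hω'
  exact (sum_lt_sum_of_nonempty univ_nonempty fun i _ => hω' i).not_ge hω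

theorem measure_sqrt_sum_sq_ge_le_card_mul {Ω ι : Type*} [MeasurableSpace Ω] [Fintype ι]
    [Nonempty ι] (μ : Measure Ω) (y : ι → Ω → ℝ) {t : ι → ℝ} (ht : ∀ i, 0 ≤ t i)
    {ε : ENNReal} (hε : ∀ i, μ {ω | t i ≤ |y i ω|} ≤ ε) :
    μ {ω | Real.sqrt (∑ i, t i ^ 2) ≤ Real.sqrt (∑ i, y i ω ^ 2)} ≤ Fintype.card ι * ε := by
  have hsq (i : ι) (ω : Ω) : t i ^ 2 ≤ y i ω ^ 2 ↔ t i ≤ |y i ω| := by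
    rw [sq_le_sq, abs_of_nonneg (ht i)]
  have hsqrt (ω : Ω) : Real.sqrt (∑ i, t i ^ 2) ≤ Real.sqrt (∑ i, y i ω ^ 2) ↔
      ∑ i, t i ^ 2 ≤ ∑ i, y i ω ^ 2 :=
    Real.sqrt_le_sqrt_iff (sum_nonneg fun i _ => sq_nonneg _)
  calc _ ≤ ∑ i, μ {ω | t i ^ 2 ≤ y i ω ^ 2} := by
        simpa only [hsqrt] using
          measure_sum_ge_le_sum_measure μ (fun i ω => y i ω ^ 2) (fun i => t i ^ 2)
    _ ≤ ∑ _i : ι, ε := sum_le_sum fun i _ => by simpa only [hsq] using hε i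
    _ = Fintype.card ι * ε := by rw [sum_const, card_univ, nsmul_eq_mul]

theorem sum_sq_mul_sigma_fst_eq {L : ℕ} (dl : Fin L → ℕ) (s : Fin L → ℝ) {d : ℕ} (hd : d ≠ 0)
    (k : ℝ) : ∑ li : Σ l : Fin L, Fin (dl l), (k * s li.1) ^ 2 =
      (k * (Real.sqrt (∑ l, ((dl l : ℝ) / d) * s l ^ 2) * Real.sqrt d)) ^ 2 := by
  have hd' : (d : ℝ) ≠ 0 := Nat.cast_ne_zero.2 hd
  rw [mul_pow, mul_pow, Real.sq_sqrt (by positivity), Real.sq_sqrt (by positivity),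
    Fintype.sum_sigma, sum_mul, mul_sum]
  simp only [sum_const, card_univ, Fintype.card_fin, nsmul_eq_mul]
  exact sum_congr rfl fun l _ => by field_simp

theorem one_le_four_mul_div {p u d δ : ℝ} (hp : 0 ≤ p) (hu0 : 0 ≤ u) (hu1 : u ≤ 1) (hδ : 0 < δ)
    (hδu : δ < 2 * d * u ^ p) : 1 ≤ 4 * d / δ := by
  have hup : u ^ p ≤ 1 := Real.rpow_le_one hu0 hu1 hp
  have hup0 : 0 ≤ u ^ p := Real.rpow_nonneg hu0 p
  rw [one_le_div hδ]
  nlinarith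

theorem div_le_rpow_one_div {p u d δ : ℝ} (hp : 0 < p) (hp2 : p ≤ 2) (hu : 0 < u)
    (hδ : 0 < δ) (hδu : δ < 2 * d * u ^ p) : 4 / (3 * u) ≤ (4 * d / δ) ^ (1 / p) := by
  have hup : 0 < u ^ p := Real.rpow_pos_of_pos hu p
  have hd : 0 < d := by nlinarith
  rw [one_div, Real.le_rpow_inv_iff_of_pos (by positivity) (by positivity) hp,
    ← div_div, Real.div_rpow (by norm_num) hu.le]
  have h43 : (4 / 3 : ℝ) ^ p ≤ 2 := calc
    (4 / 3 : ℝ) ^ p ≤ (4 / 3) ^ (2 : ℝ) := Real.rpow_le_rpow_of_exponent_le (by norm_num) hp2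
    _ ≤ 2 := by norm_num
  rw [div_le_div_iff₀ hup hδ]
  nlinarith

theorem inv_rpow_one_div_rpow_le_inv {y p a : ℝ} (hy : 1 ≤ y) (hp : 0 < p) (hpa : p ≤ a) :
    ((y ^ (1 / p))⁻¹) ^ a ≤ y⁻¹ := by
  have hy0 : 0 ≤ y := zero_le_one.trans hy
  rw [Real.inv_rpow (Real.rpow_nonneg hy0 _), ← Real.rpow_mul hy0]
  refine inv_anti₀ (by positivity) (Real.self_le_rpow_of_one_le hy ?_)
  rwa [one_div_mul_eq_div, one_le_div hp]

theorem measure_abs_ge_le_of_stable_tail {Ω : Type*} [MeasurableSpace Ω] {μ : Measure Ω}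
    {X : Ω → ℝ} {α β s y p : ℝ} (hs : 0 < s) (hαβ : α ≤ β) (hβ : β < 2)
    (htail : ∀ a : ℝ, 4 * s / (2 - α) ≤ a →
      μ {ω | a ≤ |X ω|} ≤ ENNReal.ofReal (4 * (3 * s / a) ^ α))
    (hy : 1 ≤ y) (hp : 0 < p) (hpα : p ≤ α) (hc : 4 / (3 * (2 - β)) ≤ y ^ (1 / p)) :
    μ {ω | 3 * y ^ (1 / p) * s ≤ |X ω|} ≤ ENNReal.ofReal (4 * y⁻¹) := by
  set c := y ^ (1 / p)
  have hc0 : 0 < c := Real.rpow_pos_of_pos (zero_lt_one.trans_le hy) _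
  have hthreshold : 4 * s / (2 - α) ≤ 3 * c * s := by
    have h2β : 0 < 2 - β := sub_pos.2 hβ
    calc 4 * s / (2 - α) ≤ 4 * s / (2 - β) := by gcongr
      _ = 3 * (4 / (3 * (2 - β))) * s := by field_simp
      _ ≤ 3 * c * s := by gcongr
  refine (htail _ hthreshold).trans (ENNReal.ofReal_le_ofReal ?_)
  have hratio : 3 * s / (3 * c * s) = c⁻¹ := by field_simp
  rw [hratio]
  gcongr
  exact inv_rpow_one_div_rpow_le_inv hy hp hpα

theorem heavy_tailed_norm_bound
    {Ω : Type*} [MeasurableSpace Ω] (μ : Measure Ω)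
    (L : ℕ) (hL : 1 ≤ L) (dl : Fin L → ℕ)
    (x : (Σ l : Fin L, Fin (dl l)) → Ω → ℝ)
    (α : Fin L → ℝ) (hα : ∀ l, α l ∈ Set.Ioo (1 : ℝ) 2)
    (σl : Fin L → ℝ) (hσl : ∀ l, 0 < σl l)
    -- the normalized symmetric stable tail bound
    (htail : ∀ (l : Fin L) (i : Fin (dl l)) (a : ℝ), 4 * σl l / (2 - α l) ≤ a →
      μ {ω | a ≤ |x ⟨l, i⟩ ω|} ≤ ENNReal.ofReal (4 * (3 * σl l / a) ^ (α l)))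
    (d : ℕ) (hd : d = ∑ l, dl l)
    (σ : ℝ) (hσ : σ = Real.sqrt (∑ l, ((dl l : ℝ) / d) * σl l ^ 2))
    (αmin αmax : ℝ)
    (hαmin : αmin = Finset.univ.inf' (by simp [Finset.univ_nonempty_iff]; exact Fin.pos_iff_nonempty.mp (by omega)) α)
    (hαmax : αmax = Finset.univ.sup' (by simp [Finset.univ_nonempty_iff]; exact Fin.pos_iff_nonempty.mp (by omega)) α)
    (δ : ℝ) (hδpos : 0 < δ) (hδ : δ < 2 * d * (2 - αmax) ^ αmin) :
    μ {ω | 3 * σ * Real.sqrt d * (4 * d / δ) ^ (1 / αmin) ≤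
        Real.sqrt (∑ li : Σ l : Fin L, Fin (dl l), (x li ω) ^ 2)} ≤
      ENNReal.ofReal δ := by
  have l₀ : Fin L := ⟨0, hL⟩
  have hαmin_le (l : Fin L) : αmin ≤ α l := hαmin ▸ inf'_le α (mem_univ l)
  have hle_αmax (l : Fin L) : α l ≤ αmax := hαmax ▸ le_sup' α (mem_univ l)
  have hαmin_pos : 0 < αmin := by
    rw [hαmin, lt_inf'_iff]; exact fun l _ => one_pos.trans (hα l).1
  have hαmax_lt : αmax < 2 := by
    rw [hαmax, sup'_lt_iff]; exact fun l _ => (hα l).2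
  have hbase : 1 ≤ 4 * d / δ := one_le_four_mul_div hαmin_pos.le (by linarith)
    (by linarith [(hα l₀).1, hle_αmax l₀]) hδpos hδ
  have hc : 4 / (3 * (2 - αmax)) ≤ (4 * d / δ) ^ (1 / αmin) :=
    div_le_rpow_one_div hαmin_pos ((hαmin_le l₀).trans (hα l₀).2.le) (by linarith) hδpos hδ
  set c := (4 * d / δ) ^ (1 / αmin)
  have hd_pos : (0 : ℝ) < d := by nlinarith [Real.rpow_nonneg (sub_nonneg.2 hαmax_lt.le) αmin]
  have hcard : Fintype.card (Σ l : Fin L, Fin (dl l)) = d := by simp [hd]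
  have : Nonempty (Σ l : Fin L, Fin (dl l)) :=
    Fintype.card_pos_iff.1 (by exact_mod_cast hcard ▸ hd_pos)
  have hnorm : 3 * σ * Real.sqrt d * c =
      Real.sqrt (∑ li : Σ l : Fin L, Fin (dl l), (3 * c * σl li.1) ^ 2) := by
    rw [sum_sq_mul_sigma_fst_eq dl σl (by exact_mod_cast hd_pos.ne') (3 * c), ← hσ,
      Real.sqrt_sq (by have := hσ ▸ Real.sqrt_nonneg _; positivity)]
    ring
  have hcoord (li : Σ l : Fin L, Fin (dl l)) :
      μ {ω | 3 * c * σl li.1 ≤ |x li ω|} ≤ ENNReal.ofReal (δ / d) := by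
    convert measure_abs_ge_le_of_stable_tail (hσl li.1) (hle_αmax li.1) hαmax_lt
      (htail li.1 li.2) hbase hαmin_pos (hαmin_le li.1) hc using 2
    field_simp
  calc _ ≤ Fintype.card (Σ l : Fin L, Fin (dl l)) * ENNReal.ofReal (δ / d) := by
        rw [hnorm]
        exact measure_sqrt_sum_sq_ge_le_card_mul μ x (fun li => by
          have := hσl li.1; have := zero_lt_one.trans_le hbase; positivity) hcoord
    _ = ENNReal.ofReal δ := by
      rw [hcard, ← ENNReal.ofReal_natCast, ← ENNReal.ofReal_mul hd_pos.le,
        mul_div_cancel₀ _ hd_pos.ne']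
end

section
/- Let h_b^{(1)}(κ, d) = (⌈d/2⌉/d)·max(h_b(⌈κd/2⌉/⌈d/2⌉), h_b(⌊κd/2⌋/⌈d/2⌉)) for κ ∈ [0,1] with κd an integer. Then h_b^{(1)}(κ, d) ≤ log(2)·(1/2 + 1/d), and therefore for d ≥ 12 and ε ∈ (0,1), ε^{1−κ}·exp(h_b(κ) + h_b^{(1)}(κ,d)) ≤ 3·ε^{1−κ}. -/
lemma binEnt_eq_binEntropy_s18 (x : ℝ) : binEnt x = Real.binEntropy x := by
  rw [binEnt, Real.binEntropy, Real.log_inv, Real.log_inv]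
  ring

lemma binEnt_le_log_two (x : ℝ) : binEnt x ≤ Real.log 2 :=
  binEnt_eq_binEntropy_s18 x ▸ Real.binEntropy_le_log_two

lemma ceil_half_div_le (n : ℕ) : (⌈(n : ℝ) / 2⌉ : ℝ) / n ≤ 1 / 2 + 1 / n := by
  rcases Nat.eq_zero_or_pos n with rfl | hn
  · norm_num
  have hn' : (0 : ℝ) < n := by exact_mod_cast hn
  have hceil : (⌈(n : ℝ) / 2⌉ : ℝ) < n / 2 + 1 := Int.ceil_lt_add_one _
  rw [div_le_iff₀ hn', add_mul, one_div_mul_cancel hn'.ne']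
  linarith

lemma exp_log_two_mul_nineteen_twelfths_le_three : Real.exp (Real.log 2 * (19 / 12)) ≤ 3 := by
  rw [← Real.rpow_def_of_pos two_pos]
  have h : ((2 : ℝ) ^ ((19 : ℝ) / 12)) ^ (12 : ℕ) ≤ (3 : ℝ) ^ (12 : ℕ) := by
    rw [← Real.rpow_natCast, ← Real.rpow_mul zero_le_two]
    norm_num
  exact le_of_pow_le_pow_left₀ (by norm_num) (by norm_num) h

theorem hb1_bound_general (d : ℕ) (κ : ℝ)
    (hb1 : ℝ)
    (hhb1 : hb1 = ((⌈(d : ℝ) / 2⌉ : ℝ) / d) *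
      max (binEnt ((⌈κ * d / 2⌉ : ℝ) / (⌈(d : ℝ) / 2⌉ : ℝ)))
          (binEnt ((⌊κ * d / 2⌋ : ℝ) / (⌈(d : ℝ) / 2⌉ : ℝ)))) :
    hb1 ≤ Real.log 2 * (1 / 2 + 1 / d) ∧
    (12 ≤ d → ∀ ε : ℝ, ε ∈ Set.Ioo (0 : ℝ) 1 →
      ε ^ (1 - κ) * Real.exp (binEnt κ + hb1) ≤ 3 * ε ^ (1 - κ)) := by
  have hlog2 : 0 ≤ Real.log 2 := Real.log_nonneg one_le_two
  have hb1_le : hb1 ≤ Real.log 2 * (1 / 2 + 1 / d) := by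
    rw [hhb1, mul_comm (Real.log 2)]
    have hratio_nonneg : (0 : ℝ) ≤ (⌈(d : ℝ) / 2⌉ : ℝ) / d := by positivity
    exact (mul_le_mul_of_nonneg_left (max_le (binEnt_le_log_two _) (binEnt_le_log_two _))
      hratio_nonneg).trans (mul_le_mul_of_nonneg_right (ceil_half_div_le d) hlog2)
  refine ⟨hb1_le, fun hd ε hε => ?_⟩
  have hinv_d : (1 : ℝ) / d ≤ 1 / 12 := one_div_le_one_div_of_le (by norm_num) (by exact_mod_cast hd)
  have hexponent : binEnt κ + hb1 ≤ Real.log 2 * (19 / 12) := by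
    nlinarith [binEnt_le_log_two κ]
  rw [mul_comm 3]
  refine mul_le_mul_of_nonneg_left ?_ (Real.rpow_nonneg hε.1.le _)
  exact (Real.exp_le_exp.2 hexponent).trans exp_log_two_mul_nineteen_twelfths_le_three

theorem hb1_bound (d : ℕ) (hd : 1 ≤ d) (κ : ℝ) (hκ : κ ∈ Set.Icc (0 : ℝ) 1)
    (hint : ∃ m : ℕ, (m : ℝ) = κ * d)
    (hb1 : ℝ)
    (hhb1 : hb1 = ((⌈(d : ℝ) / 2⌉ : ℝ) / d) *
      max (binEnt ((⌈κ * d / 2⌉ : ℝ) / (⌈(d : ℝ) / 2⌉ : ℝ)))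
          (binEnt ((⌊κ * d / 2⌋ : ℝ) / (⌈(d : ℝ) / 2⌉ : ℝ)))) :
    hb1 ≤ Real.log 2 * (1 / 2 + 1 / d) ∧
    (12 ≤ d → ∀ ε : ℝ, ε ∈ Set.Ioo (0 : ℝ) 1 →
      ε ^ (1 - κ) * Real.exp (binEnt κ + hb1) ≤ 3 * ε ^ (1 - κ)) :=
  hb1_bound_general d κ hb1 hhb1
end
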